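/- Let F be a field and let g(t,s) ∈ F⟨t,s⟩ be a noncommutative polynomial in two variables. The Anick-type endomorphism δ of F⟨x,y,z⟩ given by δ(x) = x + z·g(xz − zy, z), δ(y) = y + g(xz − zy, z)·z, δ(z) = z is an automorphism of F⟨x,y,z⟩, with inverse x ↦ x − z·g(xz − zy, z), y ↦ y − g(xz − zy, z)·z, z ↦ z. -/
import Mathlib


noncomputable section

/-- Evaluation of a two-variable noncommutative polynomial at a pair of elements. -/
def ev2 (F : Type) [Field F] {A : Type} [Semiring A] [Algebra F A]
    (g : FreeAlgebra F (Fin 2)) (u v : A) : A :=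
  FreeAlgebra.lift F ![u, v] g

/-- The F-algebra endomorphism of F⟨x,y,z⟩ sending the generators to p, q, r. -/
def mk3 (F : Type) [Field F] (p q r : FreeAlgebra F (Fin 3)) :
    FreeAlgebra F (Fin 3) →ₐ[F] FreeAlgebra F (Fin 3) :=
  FreeAlgebra.lift F ![p, q, r]

lemma map_ev2 (F : Type) [Field F] {A B : Type} [Semiring A] [Algebra F A]
    [Semiring B] [Algebra F B] (φ : A →ₐ[F] B) (g : FreeAlgebra F (Fin 2)) (u v : A) :
    φ (ev2 F g u v) = ev2 F g (φ u) (φ v) := by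
  have : φ.comp (FreeAlgebra.lift F ![u, v]) = FreeAlgebra.lift F ![φ u, φ v] := by
    apply FreeAlgebra.hom_ext
    funext i
    fin_cases i <;> simp
  exact congrArg (fun ψ : FreeAlgebra F (Fin 2) →ₐ[F] B => ψ g) this

lemma mk3_x (F : Type) [Field F] (p q r : FreeAlgebra F (Fin 3)) :
    mk3 F p q r (FreeAlgebra.ι F 0) = p := by simp [mk3]

lemma mk3_y (F : Type) [Field F] (p q r : FreeAlgebra F (Fin 3)) :
    mk3 F p q r (FreeAlgebra.ι F 1) = q := by simp [mk3]

lemma mk3_z (F : Type) [Field F] (p q r : FreeAlgebra F (Fin 3)) :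
    mk3 F p q r (FreeAlgebra.ι F 2) = r := by simp [mk3]

theorem stmt7 (F : Type) [Field F] (g : FreeAlgebra F (Fin 2))
    (x y z : FreeAlgebra F (Fin 3))
    (hx : x = FreeAlgebra.ι F 0) (hy : y = FreeAlgebra.ι F 1)
    (hz : z = FreeAlgebra.ι F 2) :
    (mk3 F (x + z * ev2 F g (x * z - z * y) z) (y + ev2 F g (x * z - z * y) z * z) z).comp
        (mk3 F (x - z * ev2 F g (x * z - z * y) z) (y - ev2 F g (x * z - z * y) z * z) z)
      = AlgHom.id F (FreeAlgebra F (Fin 3)) ∧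
    (mk3 F (x - z * ev2 F g (x * z - z * y) z) (y - ev2 F g (x * z - z * y) z * z) z).comp
        (mk3 F (x + z * ev2 F g (x * z - z * y) z) (y + ev2 F g (x * z - z * y) z * z) z)
      = AlgHom.id F (FreeAlgebra F (Fin 3)) := by
  subst hx hy hz
  set x := FreeAlgebra.ι F (0 : Fin 3) with hx
  set y := FreeAlgebra.ι F (1 : Fin 3) with hy
  set z := FreeAlgebra.ι F (2 : Fin 3) with hz
  set w : FreeAlgebra F (Fin 3) := ev2 F g (x * z - z * y) z with hw
  set δp := mk3 F (x + z * w) (y + w * z) z with hδp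
  set δm := mk3 F (x - z * w) (y - w * z) z with hδm
  have hpx : δp x = x + z * w := by rw [hδp, hx]; exact mk3_x F (x + z * w) (y + w * z) z
  have hpy : δp y = y + w * z := by rw [hδp, hy]; exact mk3_y F (x + z * w) (y + w * z) z
  have hpz : δp z = z := by rw [hδp, hz]; exact mk3_z F (x + z * w) (y + w * z) z
  have hmx : δm x = x - z * w := by rw [hδm, hx]; exact mk3_x F (x - z * w) (y - w * z) z
  have hmy : δm y = y - w * z := by rw [hδm, hy]; exact mk3_y F (x - z * w) (y - w * z) z
  have hmz : δm z = z := by rw [hδm, hz]; exact mk3_z F (x - z * w) (y - w * z) z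
  have hpw : δp w = w := by
    rw [hw, map_ev2, map_sub, map_mul, map_mul, hpx, hpy, hpz]
    congr 1
    noncomm_ring
  have hmw : δm w = w := by
    rw [hw, map_ev2, map_sub, map_mul, map_mul, hmx, hmy, hmz]
    congr 1
    noncomm_ring
  have c1 : δp (δm x) = x := by rw [hmx, map_sub, map_mul, hpx, hpz, hpw]; noncomm_ring
  have c2 : δp (δm y) = y := by rw [hmy, map_sub, map_mul, hpy, hpz, hpw]; noncomm_ring
  have c3 : δp (δm z) = z := by rw [hmz, hpz]
  have d1 : δm (δp x) = x := by rw [hpx, map_add, map_mul, hmx, hmz, hmw]; noncomm_ring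
  have d2 : δm (δp y) = y := by rw [hpy, map_add, map_mul, hmy, hmz, hmw]; noncomm_ring
  have d3 : δm (δp z) = z := by rw [hpz, hmz]
  refine ⟨FreeAlgebra.hom_ext (funext fun i => ?_), FreeAlgebra.hom_ext (funext fun i => ?_)⟩ <;>
    fin_cases i <;>
    simp only [Function.comp_apply, AlgHom.coe_comp, AlgHom.coe_id, id_eq]
  · exact c1
  · exact c2
  · exact c3
  · exact d1
  · exact d2
  · exact d3
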